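/- arXiv:0803.3096 — 2 statements merged into one kernel-verified Lean document; each statement's English description precedes it below -/
import Mathlib

section
/- Private state construction used in the proof of Theorem 2: Let {|x̃⟩}_{x=0}^{d−1} be a conjugate basis of ℂ^d with |x̃⟩ = (1/√d) ∑_k e^{iθ_{xk}} |k⟩, let |η_x⟩ for x = 0,…,d−1 be arbitrary (not necessarily normalized) vectors in a space S', and let {|x⟩^T}_{x=0}^{d−1} be the standard basis of ℂ^d. If the vector |ψ⟩ := ∑_{x=0}^{d−1} (1/√d) ∑_{k=0}^{d−1} e^{iθ_{xk}} |k⟩^A |k⟩^B ⊗ |η_x⟩^{S'} ⊗ |x⟩^T has unit norm, then |ψ⟩⟨ψ| is an exact private state of key size d with key systems A, B and shield S'⊗T; in particular, the twisting operator W^{BT} := ∑_{k,x} e^{−iθ_{xk}} P_k^B ⊗ P_x^T maps |ψ⟩ to |Φ_d⟩^{AB} ⊗ |χ⟩^{S'T} for some unit vector |χ⟩. -/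
open Matrix Complex BigOperators Finset
open Kronecker
open scoped ComplexOrder

noncomputable section

/-- ρ is a density operator: positive semidefinite with unit trace. -/
def IsDensity {ι : Type*} [Fintype ι] (ρ : Matrix ι ι ℂ) : Prop :=
  ρ.PosSemidef ∧ ρ.trace = 1

/-- A POVM indexed by `μ` on a system with index set `ι`. -/
def IsPOVM {μ ι : Type*} [Fintype μ] [Fintype ι] [DecidableEq ι]
    (Λ : μ → Matrix ι ι ℂ) : Prop :=
  (∀ m, (Λ m).PosSemidef) ∧ ∑ m, Λ m = 1

/-- Projector |k⟩⟨k| onto a standard basis element. -/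
def stdProj {ι : Type*} [DecidableEq ι] (k : ι) : Matrix ι ι ℂ :=
  Matrix.single k k 1

/-- The standard basis vector |k⟩. -/
def stdVec {ι : Type*} [DecidableEq ι] (k : ι) : ι → ℂ :=
  fun i => if i = k then 1 else 0

/-- Trace norm Tr √(MᴴM). -/
def traceNorm {ι : Type*} [Fintype ι] [DecidableEq ι] (M : Matrix ι ι ℂ) : ℝ :=
  ((Matrix.posSemidef_conjTranspose_mul_self M).1.eigenvectorUnitary.1 *
    Matrix.diagonal (((↑) : ℝ → ℂ) ∘ (√·) ∘ (Matrix.posSemidef_conjTranspose_mul_self M).1.eigenvalues) *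
    (star (Matrix.posSemidef_conjTranspose_mul_self M).1.eigenvectorUnitary : Matrix ι ι ℂ)).trace.re

def negMulLog2 (x : ℝ) : ℝ := -(x * Real.logb 2 x)

/-- Shannon entropy in bits. -/
def shannon {α : Type*} [Fintype α] (p : α → ℝ) : ℝ := ∑ a, negMulLog2 (p a)

/-- Conditional Shannon entropy (in bits) of the first component given the second. -/
def condEnt {α β : Type*} [Fintype α] [Fintype β] (p : α × β → ℝ) : ℝ :=
  shannon p - shannon (fun b => ∑ a, p (a, b))

/-- Element |x̃⟩ = (1/√d) ∑ₖ e^{iθₓₖ}|k⟩ of a candidate conjugate basis. -/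
def conjVec (d : ℕ) (θ : Fin d → Fin d → ℝ) (x : Fin d) : Fin d → ℂ :=
  fun k => (Real.sqrt d : ℂ)⁻¹ * Complex.exp (Complex.I * (θ x k : ℂ))

/-- The family of phases θ defines a conjugate (orthonormal) basis. -/
def IsConjBasis (d : ℕ) (θ : Fin d → Fin d → ℝ) : Prop :=
  ∀ x y : Fin d, (∑ k, star (conjVec d θ x k) * conjVec d θ y k) = if x = y then 1 else 0

/-- Projector P̃ₓ = |x̃⟩⟨x̃|. -/
def conjProj (d : ℕ) (θ : Fin d → Fin d → ℝ) (x : Fin d) : Matrix (Fin d) (Fin d) ℂ :=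
  Matrix.vecMulVec (conjVec d θ x) (star (conjVec d θ x))

/-- The canonical maximally entangled vector |Φ_d⟩. -/
def maxEntVec (d : ℕ) : Fin d × Fin d → ℂ :=
  fun P => if P.1 = P.2 then (Real.sqrt d : ℂ)⁻¹ else 0

/-- Density operator of the canonical maximally entangled state Φ_d. -/
def maxEnt (d : ℕ) : Matrix (Fin d × Fin d) (Fin d × Fin d) ℂ :=
  Matrix.vecMulVec (maxEntVec d) (star (maxEntVec d))

/-- Twisting operator U = ∑ⱼₖ Pⱼ ⊗ Pₖ ⊗ Vⱼₖ. -/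
def IsTwisting {d : ℕ} {σ : Type*} [Fintype σ] [DecidableEq σ]
    (U : Matrix (Fin d × (Fin d × σ)) (Fin d × (Fin d × σ)) ℂ) : Prop :=
  ∃ V : Fin d → Fin d → Matrix σ σ ℂ,
    (∀ j k, V j k ∈ Matrix.unitaryGroup σ ℂ) ∧
    U = ∑ j, ∑ k, stdProj j ⊗ₖ (stdProj k ⊗ₖ V j k)

/-- Exact private state γ = U(Φ_d ⊗ ξ)U†. -/
def IsExactPrivate {d : ℕ} {σ : Type*} [Fintype σ] [DecidableEq σ]
    (γ : Matrix (Fin d × (Fin d × σ)) (Fin d × (Fin d × σ)) ℂ) : Prop :=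
  ∃ (U : Matrix (Fin d × (Fin d × σ)) (Fin d × (Fin d × σ)) ℂ) (ξ : Matrix σ σ ℂ),
    IsTwisting U ∧ IsDensity ξ ∧
    γ = U * (Matrix.reindex (Equiv.prodAssoc (Fin d) (Fin d) σ)
      (Equiv.prodAssoc (Fin d) (Fin d) σ) (maxEnt d ⊗ₖ ξ)) * Uᴴ

/-- ε-secret key: within trace distance 2ε of a perfect secret key state. -/
def IsSecretKey (ε : ℝ) {ι ηE : Type*} [Fintype ι] [DecidableEq ι] [Fintype ηE] [DecidableEq ηE]
    (ρ : Matrix (ι × (ι × ηE)) (ι × (ι × ηE)) ℂ) : Prop :=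
  ∃ ρE : Matrix ηE ηE ℂ, IsDensity ρE ∧
    traceNorm (ρ - (Fintype.card ι : ℂ)⁻¹ • ∑ k, stdProj k ⊗ₖ (stdProj k ⊗ₖ ρE)) ≤ 2 * ε

/-- Standard-basis key measurement on systems A and B. -/
def keyMeasured {ι ηE : Type*} [Fintype ι] [DecidableEq ι] [Fintype ηE] [DecidableEq ηE]
    (ρ : Matrix (ι × (ι × ηE)) (ι × (ι × ηE)) ℂ) : Matrix (ι × (ι × ηE)) (ι × (ι × ηE)) ℂ :=
  ∑ j, ∑ k, (stdProj j ⊗ₖ (stdProj k ⊗ₖ (1 : Matrix ηE ηE ℂ))) * ρ *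
    (stdProj j ⊗ₖ (stdProj k ⊗ₖ (1 : Matrix ηE ηE ℂ)))

/-- ε-private state: some (equivalently, every) purification yields an ε-secret key
upon standard-basis key measurement. -/
def IsEpsPrivate (ε : ℝ) {ι σ : Type*} [Fintype ι] [DecidableEq ι] [Fintype σ] [DecidableEq σ]
    (ψ : Matrix (ι × (ι × σ)) (ι × (ι × σ)) ℂ) : Prop :=
  ∃ (dE : ℕ) (v : ι × (ι × (σ × Fin dE)) → ℂ),
    (∀ P Q : ι × (ι × σ),
      (∑ e, v (P.1, (P.2.1, (P.2.2, e))) * star (v (Q.1, (Q.2.1, (Q.2.2, e))))) = ψ P Q) ∧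
    IsSecretKey ε (keyMeasured (Matrix.of fun P Q : ι × (ι × Fin dE) =>
      ∑ s : σ, v (P.1, (P.2.1, (s, P.2.2))) * star (v (Q.1, (Q.2.1, (s, Q.2.2))))))

/-- ε-private state when the eavesdropper additionally holds a public classical register. -/
def IsEpsPrivateGivenPublic (ε : ℝ) {ι σ μR : Type*}
    [Fintype ι] [DecidableEq ι] [Fintype σ] [DecidableEq σ] [Fintype μR] [DecidableEq μR]
    (ψ : Matrix ((ι × (ι × σ)) × μR) ((ι × (ι × σ)) × μR) ℂ) : Prop :=
  ∃ (dE : ℕ) (v : ((ι × (ι × σ)) × μR) × Fin dE → ℂ),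
    (∀ P Q, (∑ e, v (P, e) * star (v (Q, e))) = ψ P Q) ∧
    IsSecretKey ε (keyMeasured (Matrix.of fun P Q : ι × (ι × (μR × Fin dE)) =>
      ∑ s : σ, v (((P.1, (P.2.1, s)), P.2.2.1), P.2.2.2) *
        star (v (((Q.1, (Q.2.1, s)), Q.2.2.1), Q.2.2.2))))

open Classical in
/-- Von Neumann entropy in bits (via eigenvalues; zero on non-Hermitian input). -/
def vonNeumann {ι : Type*} [Fintype ι] [DecidableEq ι] (ρ : Matrix ι ι ℂ) : ℝ :=
  if h : ρ.IsHermitian then ∑ i, negMulLog2 (h.eigenvalues i) else 0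

/-- Unnormalized conditional state on β given measurement of the vector u on ι. -/
def condStateVec {ι β : Type*} [Fintype ι] (u : ι → ℂ)
    (ρ : Matrix (ι × β) (ι × β) ℂ) : Matrix β β ℂ :=
  Matrix.of fun w w' => ∑ a, ∑ a', star (u a) * ρ (a, w) (a', w') * u a'

/-- Outcome probability of the measurement vector u. -/
def measProb {ι β : Type*} [Fintype ι] [Fintype β] (u : ι → ℂ)
    (ρ : Matrix (ι × β) (ι × β) ℂ) : ℝ := (condStateVec u ρ).trace.re

/-- Holevo quantity of the ensemble induced on β by measuring the basis family W on ι. -/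
def holevoB {ι β κm : Type*} [Fintype ι] [Fintype β] [DecidableEq β] [Fintype κm]
    (W : κm → ι → ℂ) (ρ : Matrix (ι × β) (ι × β) ℂ) : ℝ :=
  vonNeumann (∑ x, condStateVec (W x) ρ) -
    ∑ x, measProb (W x) ρ *
      vonNeumann ((((condStateVec (W x) ρ).trace)⁻¹) • condStateVec (W x) ρ)

open Classical in
/-- Positive-semidefinite square root (zero on non-PSD input). -/
def psqrt {ι : Type*} [Fintype ι] [DecidableEq ι] (M : Matrix ι ι ℂ) : Matrix ι ι ℂ :=
  if h : M.PosSemidef then h.1.eigenvectorUnitary.1 *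
    Matrix.diagonal (((↑) : ℝ → ℂ) ∘ (√·) ∘ h.1.eigenvalues) *
    (star h.1.eigenvectorUnitary : Matrix ι ι ℂ) else 0

/-- n-fold tensor (Kronecker) product of a family of matrices. -/
def tensorPow {dB : ℕ} {n : ℕ} (φ : Fin n → Matrix (Fin dB) (Fin dB) ℂ) :
    Matrix (Fin n → Fin dB) (Fin n → Fin dB) ℂ :=
  Matrix.of fun w w' => ∏ i, φ i (w i) (w' i)

/-- n-fold tensor power of a bipartite state, grouped as (Aⁿ) × (Bⁿ). -/
def tpow {α β : Type*} (ψ : Matrix (α × β) (α × β) ℂ) (n : ℕ) :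
    Matrix ((Fin n → α) × (Fin n → β)) ((Fin n → α) × (Fin n → β)) ℂ :=
  Matrix.of fun P Q => ∏ i, ψ (P.1 i, P.2 i) (Q.1 i, Q.2 i)

/-- Output of a one-way protocol with Alice-instrument Kraus operators E and Bob isometries V;
the classical message is kept in a public register. -/
def protoOut {𝒜 ℬ 𝒜' ℬ' M κI : Type*} [Fintype 𝒜] [Fintype ℬ] [Fintype 𝒜'] [Fintype ℬ']
    [Fintype κI] [DecidableEq M]
    (E : M → κI → Matrix 𝒜' 𝒜 ℂ) (V : M → Matrix ℬ' ℬ ℂ)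
    (ρ : Matrix (𝒜 × ℬ) (𝒜 × ℬ) ℂ) : Matrix ((𝒜' × ℬ') × M) ((𝒜' × ℬ') × M) ℂ :=
  Matrix.of fun P Q =>
    if P.2 = Q.2 then
      (∑ i, ((E P.2 i ⊗ₖ V P.2) * ρ * (E P.2 i ⊗ₖ V P.2)ᴴ)) P.1 Q.1
    else 0

/-- Partial trace over the innermost factor. -/
def ptraceInner {α β γ : Type*} [Fintype γ] (M : Matrix (α × (β × γ)) (α × (β × γ)) ℂ) :
    Matrix (α × β) (α × β) ℂ :=
  Matrix.of fun P Q => ∑ c, M (P.1, (P.2, c)) (Q.1, (Q.2, c))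

/-- Partial trace over the first factor. -/
def ptraceL {α β : Type*} [Fintype α] (M : Matrix (α × β) (α × β) ℂ) : Matrix β β ℂ :=
  Matrix.of fun b b' => ∑ a, M (a, b) (a, b')
/-- Dot product of dit strings. -/
def zdot {d n : ℕ} (x y : Fin n → ZMod d) : ZMod d := ∑ a, x a * y a

/-- Syndrome map defined by a family of stabilizer strings. -/
def synMap {d n m : ℕ} (s : Fin m → (Fin n → ZMod d)) (k : Fin n → ZMod d) : Fin m → ZMod d :=
  fun i => zdot (s i) k

/-- Fourier (conjugate) basis vector |x̃⟩ on n qudits, with ω = e^{2πi/d}. -/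
def fourierVec (d n : ℕ) (x : Fin n → ZMod d) : (Fin n → ZMod d) → ℂ :=
  fun k => (Real.sqrt (d ^ n) : ℂ)⁻¹ *
    Complex.exp (2 * Real.pi * Complex.I / d) ^ (zdot x k).val

/-- Fourier basis projector P̃ₓ. -/
def fourierProj (d n : ℕ) (x : Fin n → ZMod d) :
    Matrix (Fin n → ZMod d) (Fin n → ZMod d) ℂ :=
  Matrix.vecMulVec (fourierVec d n x) (star (fourierVec d n x))

/-- Projector onto the span of standard basis vectors with a given classical label. -/
def classProj {K μ : Type*} [Fintype K] [DecidableEq K] [DecidableEq μ] (f : K → μ) (a : μ) :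
    Matrix K K ℂ := ∑ k, if f k = a then stdProj k else 0

/-- Projector Π̃_β onto the span of Fourier basis vectors with phase syndrome β. -/
def phaseProj (d n mx : ℕ) [NeZero d] (t : Fin mx → (Fin n → ZMod d)) (b : Fin mx → ZMod d) :
    Matrix (Fin n → ZMod d) (Fin n → ZMod d) ℂ :=
  ∑ x, if synMap t x = b then fourierProj d n x else 0

/-- The purification vector ∑ₖ √pₖ |k⟩|φₖ⟩. -/
def purVec {K W : Type*} (p : K → ℝ) (φ : K → W → ℂ) : K × W → ℂ :=
  fun P => (Real.sqrt (p P.1) : ℂ) * φ P.1 P.2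

/-- Reduced state on A ⊗ B of the pure state with amplitudes v on A ⊗ (B ⊗ (S ⊗ E)). -/
def redAB {K : Type*} {dB dS dE : ℕ} (v : K × (Fin dB × (Fin dS × Fin dE)) → ℂ) :
    Matrix (K × Fin dB) (K × Fin dB) ℂ :=
  Matrix.of fun P Q => ∑ sS : Fin dS, ∑ e : Fin dE,
    v (P.1, (P.2, (sS, e))) * star (v (Q.1, (Q.2, (sS, e))))

/-- Reduced state on A ⊗ B ⊗ S of the pure state with amplitudes v on A ⊗ (B ⊗ (S ⊗ E)). -/
def redABS {K : Type*} {dB dS dE : ℕ} (v : K × (Fin dB × (Fin dS × Fin dE)) → ℂ) :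
    Matrix (K × (Fin dB × Fin dS)) (K × (Fin dB × Fin dS)) ℂ :=
  Matrix.of fun P Q => ∑ e : Fin dE,
    v (P.1, (P.2.1, (P.2.2, e))) * star (v (Q.1, (Q.2.1, (Q.2.2, e))))

/-- The post-measurement vector |Ψ₂⟩ = ∑_{α,β,k} (Π_α Π̃_β ⊗ √Λ_{α,k} ⊗ 1)|Ψ⟩|k⟩^{B₂}|α⟩^R|β⟩^T,
with index grouping A × ((B × (S × E)) × (B₂ × (R × T))). -/
def oneShotVec {d n mz mx : ℕ} [NeZero d] {dB dS dE : ℕ}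
    (s : Fin mz → (Fin n → ZMod d)) (t : Fin mx → (Fin n → ZMod d))
    (Λ : (Fin mz → ZMod d) → (Fin n → ZMod d) → Matrix (Fin dB) (Fin dB) ℂ)
    (v : (Fin n → ZMod d) × (Fin dB × (Fin dS × Fin dE)) → ℂ) :
    (Fin n → ZMod d) × ((Fin dB × (Fin dS × Fin dE)) ×
      ((Fin n → ZMod d) × ((Fin mz → ZMod d) × (Fin mx → ZMod d)))) → ℂ :=
  fun P =>
    ∑ a' : Fin n → ZMod d, ∑ b' : Fin dB,
      ((classProj (synMap s) P.2.2.2.1 * phaseProj d n mx t P.2.2.2.2) P.1 a') *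
      (psqrt (Λ P.2.2.2.1 P.2.2.1) P.2.1.1 b') *
      v (a', (b', P.2.1.2))

/-- The ccq state obtained from |Ψ₂⟩ by measuring the logical values λ on A and on B₂
(recording them in registers Ā and B̄), and tracing out A, B, S, B₂ and T.
Eve keeps E and the public register R. -/
def oneShotOut {d n mz mx r : ℕ} [NeZero d] {dB dS dE : ℕ}
    (u : Fin r → (Fin n → ZMod d))
    (Ψ2 : (Fin n → ZMod d) × ((Fin dB × (Fin dS × Fin dE)) ×
      ((Fin n → ZMod d) × ((Fin mz → ZMod d) × (Fin mx → ZMod d)))) → ℂ) :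
    Matrix ((Fin r → ZMod d) × ((Fin r → ZMod d) × (Fin dE × (Fin mz → ZMod d))))
           ((Fin r → ZMod d) × ((Fin r → ZMod d) × (Fin dE × (Fin mz → ZMod d)))) ℂ :=
  Matrix.of fun P Q =>
    if P.1 = Q.1 ∧ P.2.1 = Q.2.1 then
      ∑ a : Fin n → ZMod d, ∑ k2 : Fin n → ZMod d, ∑ b : Fin dB,
        ∑ sS : Fin dS, ∑ βr : Fin mx → ZMod d,
        (if synMap u a = P.1 ∧ synMap u k2 = P.2.1 then
          Ψ2 (a, ((b, (sS, P.2.2.1)), (k2, (P.2.2.2, βr)))) *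
          star (Ψ2 (a, ((b, (sS, Q.2.2.1)), (k2, (Q.2.2.2, βr)))))
        else 0)
    else 0

/-- |Ψ₂⟩ = ∑_{k,ℓ} √pₖ |k⟩(√Λ_ℓ ⊗ 1)|φₖ⟩|ℓ⟩: coherent measurement of the POVM Λ. -/
def coherentMeasVec {N dB dE : ℕ} (p : Fin N → ℝ) (φ : Fin N → (Fin dB × Fin dE) → ℂ)
    (Λ : Fin N → Matrix (Fin dB) (Fin dB) ℂ) : Fin N × ((Fin dB × Fin dE) × Fin N) → ℂ :=
  fun P => (Real.sqrt (p P.1) : ℂ) * ∑ b', psqrt (Λ P.2.2) P.2.1.1 b' * φ P.1 (b', P.2.1.2)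

/-- |Ψ₂'⟩ = ∑ₖ √pₖ |k⟩|φₖ⟩|k⟩: perfect copy of the index k. -/
def copyVec {N dB dE : ℕ} (p : Fin N → ℝ) (φ : Fin N → (Fin dB × Fin dE) → ℂ) :
    Fin N × ((Fin dB × Fin dE) × Fin N) → ℂ :=
  fun P => if P.2.2 = P.1 then (Real.sqrt (p P.1) : ℂ) * φ P.1 P.2.1 else 0

/-!
The phase `e^{iθₓₖ}` depends only on the key index `k` of `B` and on the shield index `x` of `T`,
so `ψ = D (Φ_d ⊗ χ)` with `χ(s, x) = ηₓ(s)` and `D` the diagonal unitary with entries `e^{iθₓₖ}`.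
Read blockwise in `A ⊗ B`, `D` is a twisting operator whose blocks `V_{jk}` are diagonal phases, and
`W = D⁻¹`. Since `D` preserves norms and `Φ_d` is a unit vector, `χ` is a unit vector as well.
-/

section PureStates

variable {ι κ : Type*} [Fintype ι]

theorem isDensity_vecMulVec_star {u : ι → ℂ} (hu : ∑ i, Complex.normSq (u i) = 1) :
    IsDensity (vecMulVec u (star u)) := by
  refine ⟨posSemidef_vecMulVec_self_star u, ?_⟩
  simp [dotProduct, Complex.mul_conj, ← Complex.ofReal_sum, hu]

theorem mul_vecMulVec_star_mul_conjTranspose (A : Matrix κ ι ℂ) (u : ι → ℂ) :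
    A * vecMulVec u (star u) * Aᴴ = vecMulVec (A *ᵥ u) (star (A *ᵥ u)) := by
  rw [mul_vecMulVec, vecMulVec_mul, star_mulVec]

end PureStates

section Diagonal

variable {ι : Type*} [Fintype ι] [DecidableEq ι] {f : ι → ℂ}

theorem diagonal_mem_unitaryGroup (hf : ∀ i, ‖f i‖ = 1) : diagonal f ∈ unitaryGroup ι ℂ := by
  rw [mem_unitaryGroup_iff, star_eq_conjTranspose, diagonal_conjTranspose, diagonal_mul_diagonal]
  convert diagonal_one with i
  simp [Complex.mul_conj, Complex.normSq_eq_norm_sq, hf]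

theorem sum_normSq_diagonal_mulVec (hf : ∀ i, ‖f i‖ = 1) (v : ι → ℂ) :
    ∑ i, Complex.normSq ((diagonal f *ᵥ v) i) = ∑ i, Complex.normSq (v i) := by
  simp [mulVec_diagonal, Complex.normSq_eq_norm_sq, hf]

end Diagonal

def assocTensor {α β γ : Type*} (u : α × β → ℂ) (v : γ → ℂ) : α × (β × γ) → ℂ :=
  fun P => u (P.1, P.2.1) * v P.2.2

theorem reindex_prodAssoc_kronecker_vecMulVec {α β γ : Type*} (u : α × β → ℂ) (v : γ → ℂ) :
    reindex (Equiv.prodAssoc α β γ) (Equiv.prodAssoc α β γ)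
        (vecMulVec u (star u) ⊗ₖ vecMulVec v (star v)) =
      vecMulVec (assocTensor u v) (star (assocTensor u v)) := by
  ext P Q
  simp only [reindex_apply, submatrix_apply, Equiv.prodAssoc_symm_apply, kroneckerMap_apply,
    vecMulVec_apply, Pi.star_apply, assocTensor, star_mul']
  ring

theorem sum_normSq_assocTensor {α β γ : Type*} [Fintype α] [Fintype β] [Fintype γ]
    (u : α × β → ℂ) (v : γ → ℂ) :
    ∑ P, Complex.normSq (assocTensor u v P) =
      (∑ P, Complex.normSq (u P)) * ∑ c, Complex.normSq (v c) := by
  rw [← (Equiv.prodAssoc α β γ).sum_comp, Fintype.sum_prod_type, Finset.sum_mul_sum]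
  simp [assocTensor]

theorem sum_normSq_maxEntVec {d : ℕ} (hd : 0 < d) :
    ∑ P, Complex.normSq (maxEntVec d P) = 1 := by
  have hd' : (d : ℝ) ≠ 0 := by positivity
  simp [maxEntVec, Fintype.sum_prod_type, apply_ite Complex.normSq, hd']

theorem isTwisting_diagonal {d : ℕ} {σ : Type*} [Fintype σ] [DecidableEq σ]
    {f : Fin d → Fin d → σ → ℂ} (hf : ∀ j k s, ‖f j k s‖ = 1) :
    IsTwisting (diagonal fun P : Fin d × (Fin d × σ) => f P.1 P.2.1 P.2.2) := by
  refine ⟨fun j k => diagonal (f j k), fun j k => diagonal_mem_unitaryGroup (hf j k), ?_⟩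
  ext P Q
  simp only [stdProj, ← diagonal_single, diagonal_kronecker_diagonal, Matrix.sum_apply,
    diagonal_apply]
  split_ifs with h <;> simp [h, Pi.single_apply]

theorem isExactPrivate_of_isTwisting_mulVec {d : ℕ} {σ : Type*} [Fintype σ] [DecidableEq σ]
    {U : Matrix (Fin d × (Fin d × σ)) (Fin d × (Fin d × σ)) ℂ} (hU : IsTwisting U)
    {χ : σ → ℂ} (hχ : ∑ s, Complex.normSq (χ s) = 1) :
    IsExactPrivate (vecMulVec (U *ᵥ assocTensor (maxEntVec d) χ)
      (star (U *ᵥ assocTensor (maxEntVec d) χ))) :=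
  ⟨U, vecMulVec χ (star χ), hU, isDensity_vecMulVec_star hχ, by
    rw [maxEnt, reindex_prodAssoc_kronecker_vecMulVec, mul_vecMulVec_star_mul_conjTranspose]⟩

theorem sum_smul_one_kronecker_stdProj_kronecker_eq_diagonal {α β γ δ : Type*}
    [Fintype β] [Fintype δ] [DecidableEq α] [DecidableEq β] [DecidableEq γ] [DecidableEq δ]
    (c : β → δ → ℂ) :
    ∑ k, ∑ x, c k x • ((1 : Matrix α α ℂ) ⊗ₖ (stdProj k ⊗ₖ ((1 : Matrix γ γ ℂ) ⊗ₖ stdProj x))) =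
      diagonal fun P : α × (β × (γ × δ)) => c P.2.1 P.2.2.2 := by
  ext P Q
  simp only [stdProj, ← diagonal_single, ← diagonal_one, diagonal_kronecker_diagonal,
    Matrix.sum_apply, Matrix.smul_apply, diagonal_apply]
  split_ifs with h <;> simp [h, Pi.single_apply]

theorem private_state_construction_general
    {d dS' : ℕ}
    (θ : Fin d → Fin d → ℝ)
    (η : Fin d → Fin dS' → ℂ)
    (ψv : Fin d × (Fin d × (Fin dS' × Fin d)) → ℂ)
    (hψv : ∀ P, ψv P = if P.1 = P.2.1 then
        (Real.sqrt d : ℂ)⁻¹ * Complex.exp (Complex.I * (θ P.2.2.2 P.1 : ℂ)) *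
          η P.2.2.2 P.2.2.1
      else 0)
    (hnorm : ∑ P, Complex.normSq (ψv P) = 1) :
    IsExactPrivate (Matrix.vecMulVec ψv (star ψv)) ∧
    ∃ χ : Fin dS' × Fin d → ℂ, (∑ z, Complex.normSq (χ z) = 1) ∧
      Matrix.mulVec
        (∑ k : Fin d, ∑ x : Fin d, Complex.exp (-(Complex.I * (θ x k : ℂ))) •
          ((1 : Matrix (Fin d) (Fin d) ℂ) ⊗ₖ
            (stdProj k ⊗ₖ ((1 : Matrix (Fin dS') (Fin dS') ℂ) ⊗ₖ stdProj x))))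
        ψv
      = fun P => maxEntVec d (P.1, P.2.1) * χ P.2.2 := by
  set χ : Fin dS' × Fin d → ℂ := fun z => η z.2 z.1
  have hψ : ψv = diagonal (fun P => exp (I * θ P.2.2.2 P.2.1)) *ᵥ assocTensor (maxEntVec d) χ := by
    funext P
    rw [hψv, mulVec_diagonal]
    simp only [assocTensor, maxEntVec, χ]
    split_ifs with h
    · rw [h]; ring
    · simp
  have hd : 0 < d := Nat.pos_of_ne_zero (by rintro rfl; simp at hnorm)
  have hχ : ∑ z, Complex.normSq (χ z) = 1 := by
    rwa [hψ, sum_normSq_diagonal_mulVec (fun _ => norm_exp_I_mul_ofReal _),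
      sum_normSq_assocTensor, sum_normSq_maxEntVec hd, one_mul] at hnorm
  refine ⟨?_, χ, hχ, ?_⟩
  · rw [hψ]
    exact isExactPrivate_of_isTwisting_mulVec
      (isTwisting_diagonal (σ := Fin dS' × Fin d) fun _ k s => norm_exp_I_mul_ofReal (θ s.2 k)) hχ
  · rw [sum_smul_one_kronecker_stdProj_kronecker_eq_diagonal, hψ, mulVec_mulVec,
      diagonal_mul_diagonal]
    funext P
    simp [assocTensor, ← Complex.exp_add]

/-- **Private state construction used in the proof of Theorem 2.**
If |ψ⟩ = ∑ₓ (1/√d) ∑ₖ e^{iθₓₖ}|k⟩^A|k⟩^B ⊗ |ηₓ⟩^{S'} ⊗ |x⟩^T is a unit vector, then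
|ψ⟩⟨ψ| is an exact private state of key size d with shield S' ⊗ T; in particular the
twisting operator W^{BT} = ∑ₖₓ e^{-iθₓₖ} Pₖ^B ⊗ Pₓ^T maps |ψ⟩ to |Φ_d⟩ ⊗ |χ⟩ for some
unit vector |χ⟩. -/
theorem private_state_construction
    {d dS' : ℕ} (hd : 0 < d)
    (θ : Fin d → Fin d → ℝ) (hθ : IsConjBasis d θ)
    (η : Fin d → Fin dS' → ℂ)
    (ψv : Fin d × (Fin d × (Fin dS' × Fin d)) → ℂ)
    (hψv : ∀ P, ψv P = if P.1 = P.2.1 then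
        (Real.sqrt d : ℂ)⁻¹ * Complex.exp (Complex.I * (θ P.2.2.2 P.1 : ℂ)) *
          η P.2.2.2 P.2.2.1
      else 0)
    (hnorm : ∑ P, Complex.normSq (ψv P) = 1) :
    IsExactPrivate (Matrix.vecMulVec ψv (star ψv)) ∧
    ∃ χ : Fin dS' × Fin d → ℂ, (∑ z, Complex.normSq (χ z) = 1) ∧
      Matrix.mulVec
        (∑ k : Fin d, ∑ x : Fin d, Complex.exp (-(Complex.I * (θ x k : ℂ))) •
          ((1 : Matrix (Fin d) (Fin d) ℂ) ⊗ₖ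
            (stdProj k ⊗ₖ ((1 : Matrix (Fin dS') (Fin dS') ℂ) ⊗ₖ stdProj x))))
        ψv
      = fun P => maxEntVec d (P.1, P.2.1) * χ P.2.2 :=
  private_state_construction_general θ η ψv hψv hnorm
end
end

section
/- Coherent information identity (used in the proof of Corollary 1): Let |ψ⟩^{ABE} be any unit vector in ℂ^{d_A} ⊗ ℂ^{d_B} ⊗ ℂ^{d_E} with reduced density operators ρ^{AB}, ρ^{B}, ρ^{AE}, etc. Then I_c(A⟩B) = I(Z^A:B) − I(Z^A:E), where Z^A denotes the standard-basis measurement on A, I(Z^A:B) and I(Z^A:E) are the Holevo quantities computed from ρ^{AB} and ρ^{AE} respectively, and I_c(A⟩B) = S(ρ^B) − S(ρ^{AB}). -/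
open Matrix Complex BigOperators Finset
open Kronecker
open scoped ComplexOrder

noncomputable section

/-!
Write `ψ = ∑ₐ |a⟩ ⊗ Mₐ` with `Mₐ` the amplitude matrix of the `B ⊗ E` part. Outcome `a` of the
standard-basis measurement on `A` leaves `B ⊗ E` in the pure state `Mₐ`, whose marginals
`Mₐ Mₐᴴ` on `B` and `(Mₐᴴ Mₐ)ᵀ` on `E` have the same nonzero spectrum (`charpoly_mul_comm'`), so
the averaged conditional entropies in `I(Z:B)` and `I(Z:E)` cancel. The averaged states are
`ρ^B` and `ρ^E`, and `S(ρ^E) = S(ρ^{AB})` by the same spectral argument applied to `ψ` itself,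
leaving `S(ρ^B) - S(ρ^{AB})`.
-/

section Spectrum

open Polynomial

variable {m n : Type*} [Fintype m] [DecidableEq m] [Fintype n] [DecidableEq n]

lemma negMulLog2_zero : negMulLog2 0 = 0 := by simp [negMulLog2]

theorem vonNeumann_eq_sum_roots_charpoly {A : Matrix m m ℂ} (hA : A.IsHermitian) :
    vonNeumann A = (A.charpoly.roots.map fun z => negMulLog2 z.re).sum := by
  rw [vonNeumann, dif_pos hA, hA.roots_charpoly_eq_eigenvalues, Multiset.map_map]
  rfl

/-- `M * N` and `N * M` have the same nonzero eigenvalues with multiplicities. -/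
theorem vonNeumann_mul_comm {M : Matrix m n ℂ} {N : Matrix n m ℂ} (hMN : (M * N).IsHermitian)
    (hNM : (N * M).IsHermitian) : vonNeumann (M * N) = vonNeumann (N * M) := by
  have hroots := congrArg roots (charpoly_mul_comm' M N)
  rw [roots_mul ((monic_X_pow _).mul (charpoly_monic _)).ne_zero,
    roots_mul ((monic_X_pow _).mul (charpoly_monic _)).ne_zero, roots_X_pow, roots_X_pow] at hroots
  rw [vonNeumann_eq_sum_roots_charpoly hMN, vonNeumann_eq_sum_roots_charpoly hNM]
  simpa only [Multiset.map_add, Multiset.map_nsmul, Multiset.map_singleton, Complex.zero_re,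
    negMulLog2_zero, Multiset.sum_add, Multiset.sum_nsmul, Multiset.sum_singleton, smul_zero,
    zero_add] using congrArg (fun s => (s.map fun z => negMulLog2 z.re).sum) hroots

theorem vonNeumann_transpose (A : Matrix m m ℂ) : vonNeumann Aᵀ = vonNeumann A := by
  by_cases hA : A.IsHermitian
  · rw [vonNeumann_eq_sum_roots_charpoly hA.transpose, vonNeumann_eq_sum_roots_charpoly hA,
      charpoly_transpose]
  · have hAt : ¬ Aᵀ.IsHermitian := fun h => hA (by simpa using h.transpose)
    rw [vonNeumann, vonNeumann, dif_neg hA, dif_neg hAt]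

end Spectrum

section Gram

theorem transpose_mul_transpose_conjTranspose {m n : Type*} [Fintype m] (M : Matrix m n ℂ) :
    Mᵀ * Mᵀᴴ = (Mᴴ * M)ᵀ := by
  rw [transpose_mul, conjTranspose_transpose_eq_transpose_conjTranspose]

variable {m n : Type*} [Fintype m] [Fintype n]

theorem trace_transpose_mul_transpose_conjTranspose (M : Matrix m n ℂ) :
    (Mᵀ * Mᵀᴴ).trace = (M * Mᴴ).trace := by
  rw [transpose_mul_transpose_conjTranspose, trace_transpose, trace_mul_comm]

variable [DecidableEq m] [DecidableEq n]

theorem vonNeumann_smul_transpose_mul_transpose_conjTranspose (M : Matrix m n ℂ) {c : ℂ}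
    (hc : IsSelfAdjoint c) : vonNeumann (c • (Mᵀ * Mᵀᴴ)) = vonNeumann (c • (M * Mᴴ)) := by
  have hleft : c • (M * Mᴴ) = (c • M) * Mᴴ := (smul_mul _ _ _).symm
  have hright : c • (Mᴴ * M) = Mᴴ * (c • M) := (Matrix.mul_smul _ _ _).symm
  rw [transpose_mul_transpose_conjTranspose, ← transpose_smul, vonNeumann_transpose, hleft,
    hright]
  refine (vonNeumann_mul_comm ?_ ?_).symm
  · exact hleft ▸ (hc.smul (isHermitian_mul_conjTranspose_self M).isSelfAdjoint)
  · exact hright ▸ (hc.smul (isHermitian_conjTranspose_mul_self M).isSelfAdjoint)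

theorem vonNeumann_transpose_mul_transpose_conjTranspose (M : Matrix m n ℂ) :
    vonNeumann (Mᵀ * Mᵀᴴ) = vonNeumann (M * Mᴴ) := by
  simpa using vonNeumann_smul_transpose_mul_transpose_conjTranspose M (IsSelfAdjoint.one ℂ)

theorem vonNeumann_inv_trace_smul_transpose_mul_transpose_conjTranspose (M : Matrix m n ℂ) :
    vonNeumann ((Mᵀ * Mᵀᴴ).trace⁻¹ • (Mᵀ * Mᵀᴴ)) = vonNeumann ((M * Mᴴ).trace⁻¹ • (M * Mᴴ)) := by
  have htr : IsSelfAdjoint (M * Mᴴ).trace := by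
    rw [IsSelfAdjoint, ← trace_conjTranspose, (isHermitian_mul_conjTranspose_self M).eq]
  rw [trace_transpose_mul_transpose_conjTranspose]
  exact vonNeumann_smul_transpose_mul_transpose_conjTranspose M htr.inv₀

end Gram

theorem holevoB_sub_holevoB_of_condStateVec_eq {ι β γ κ : Type*} [Fintype ι] [Fintype β]
    [DecidableEq β] [Fintype γ] [DecidableEq γ] [Fintype κ] (W : κ → ι → ℂ)
    {ρ : Matrix (ι × β) (ι × β) ℂ} {ρ' : Matrix (ι × γ) (ι × γ) ℂ} (M : κ → Matrix β γ ℂ)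
    (hρ : ∀ x, condStateVec (W x) ρ = M x * (M x)ᴴ)
    (hρ' : ∀ x, condStateVec (W x) ρ' = (M x)ᵀ * (M x)ᵀᴴ) :
    holevoB W ρ - holevoB W ρ' =
      vonNeumann (∑ x, M x * (M x)ᴴ) - vonNeumann (∑ x, (M x)ᵀ * (M x)ᵀᴴ) := by
  simp only [holevoB, measProb, hρ, hρ',
    vonNeumann_inv_trace_smul_transpose_mul_transpose_conjTranspose]
  simp only [trace_transpose_mul_transpose_conjTranspose]
  ring

theorem condStateVec_stdVec {ι β : Type*} [Fintype ι] [DecidableEq ι] (a : ι)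
    (ρ : Matrix (ι × β) (ι × β) ℂ) :
    condStateVec (stdVec a) ρ = Matrix.of fun w w' => ρ (a, w) (a, w') := by
  ext w w'
  simp [condStateVec, stdVec, mul_comm]

namespace PureState

variable {α β γ : Type*} (v : α × (β × γ) → ℂ)

def amplitudes : Matrix (α × β) γ ℂ := Matrix.of fun P e => v (P.1, (P.2, e))

/-- Amplitudes of the unnormalized pure state of `β × γ` left by outcome `a` of the
standard-basis measurement on `α`. -/
def slice (a : α) : Matrix β γ ℂ := Matrix.of fun b e => v (a, (b, e))

def marginalAB [Fintype γ] : Matrix (α × β) (α × β) ℂ :=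
  Matrix.of fun P Q => ∑ e, v (P.1, (P.2, e)) * star (v (Q.1, (Q.2, e)))

def marginalAE [Fintype β] : Matrix (α × γ) (α × γ) ℂ :=
  Matrix.of fun P Q => ∑ b, v (P.1, (b, P.2)) * star (v (Q.1, (b, Q.2)))

def marginalB [Fintype α] [Fintype γ] : Matrix β β ℂ :=
  Matrix.of fun b b' => ∑ a, ∑ e, v (a, (b, e)) * star (v (a, (b', e)))

theorem marginalAB_eq [Fintype γ] : marginalAB v = amplitudes v * (amplitudes v)ᴴ := by
  ext P Q
  simp [marginalAB, amplitudes, mul_apply]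

theorem marginalB_eq [Fintype α] [Fintype γ] : marginalB v = ∑ a, slice v a * (slice v a)ᴴ := by
  ext b b'
  simp [marginalB, slice, mul_apply, Matrix.sum_apply]

theorem sum_transpose_slice_mul_conjTranspose [Fintype α] [Fintype β] :
    ∑ a, (slice v a)ᵀ * (slice v a)ᵀᴴ = (amplitudes v)ᵀ * (amplitudes v)ᵀᴴ := by
  ext e e'
  simp [slice, amplitudes, mul_apply, Matrix.sum_apply, Fintype.sum_prod_type]

variable [Fintype α] [DecidableEq α]

theorem condStateVec_marginalAB [Fintype γ] (a : α) :
    condStateVec (stdVec a) (marginalAB v) = slice v a * (slice v a)ᴴ := by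
  ext b b'
  simp [condStateVec_stdVec, marginalAB, slice, mul_apply]

theorem condStateVec_marginalAE [Fintype β] (a : α) :
    condStateVec (stdVec a) (marginalAE v) = (slice v a)ᵀ * (slice v a)ᵀᴴ := by
  ext e e'
  simp [condStateVec_stdVec, marginalAE, slice, mul_apply]

end PureState

theorem coherent_info_identity_general
    {dA dB dE : ℕ}
    (v : Fin dA × (Fin dB × Fin dE) → ℂ) :
    vonNeumann (Matrix.of fun b b' : Fin dB =>
        ∑ a, ∑ e, v (a, (b, e)) * star (v (a, (b', e))))
      - vonNeumann (Matrix.of fun P Q : Fin dA × Fin dB =>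
        ∑ e, v (P.1, (P.2, e)) * star (v (Q.1, (Q.2, e))))
    = holevoB stdVec (Matrix.of fun P Q : Fin dA × Fin dB =>
        ∑ e, v (P.1, (P.2, e)) * star (v (Q.1, (Q.2, e))))
      - holevoB stdVec (Matrix.of fun P Q : Fin dA × Fin dE =>
        ∑ b, v (P.1, (b, P.2)) * star (v (Q.1, (b, Q.2)))) := by
  change vonNeumann (PureState.marginalB v) - vonNeumann (PureState.marginalAB v) =
    holevoB stdVec (PureState.marginalAB v) - holevoB stdVec (PureState.marginalAE v)
  rw [holevoB_sub_holevoB_of_condStateVec_eq stdVec (PureState.slice v)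
    (PureState.condStateVec_marginalAB v) (PureState.condStateVec_marginalAE v),
    PureState.sum_transpose_slice_mul_conjTranspose,
    vonNeumann_transpose_mul_transpose_conjTranspose, PureState.marginalB_eq,
    PureState.marginalAB_eq]

/-- **Coherent information identity (used in the proof of Corollary 1).**
For any pure tripartite state |ψ⟩^{ABE},
I_c(A⟩B) = S(B) - S(AB) = I(Z^A:B) - I(Z^A:E). -/
theorem coherent_info_identity
    {dA dB dE : ℕ}
    (v : Fin dA × (Fin dB × Fin dE) → ℂ)
    (hv : ∑ P, Complex.normSq (v P) = 1) :
    vonNeumann (Matrix.of fun b b' : Fin dB =>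
        ∑ a, ∑ e, v (a, (b, e)) * star (v (a, (b', e))))
      - vonNeumann (Matrix.of fun P Q : Fin dA × Fin dB =>
        ∑ e, v (P.1, (P.2, e)) * star (v (Q.1, (Q.2, e))))
    = holevoB stdVec (Matrix.of fun P Q : Fin dA × Fin dB =>
        ∑ e, v (P.1, (P.2, e)) * star (v (Q.1, (Q.2, e))))
      - holevoB stdVec (Matrix.of fun P Q : Fin dA × Fin dE =>
        ∑ b, v (P.1, (b, P.2)) * star (v (Q.1, (b, Q.2)))) :=
  coherent_info_identity_general v
end
end
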